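/- Let k be a field, Q a prime ideal of k[a] = k[a_1,…,a_m], and J an ideal of k[a,x]; set J̃ = J + Q·k[a,x]. Let G be a minimal Gröbner basis of J̃ with respect to the block well order <, let 𝒢 = {g ∈ G : g ∉ Q} and let h = ∏_{g∈𝒢} lc_≺(g) ∈ k[a]. Then for every prime ideal P of k[a] with Q ⊆ P and h ∉ P, the set {(g)_P : g ∈ 𝒢} is a ≺-Gröbner basis of the ideal (J)_P of F(P)[x]: each (g)_P belongs to (J)_P, and Exp_≺((J)_P) = ⋃_{g∈𝒢}(exp_≺((g)_P)+ℕ^n). -/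

import Mathlib

set_option maxHeartbeats 1000000
set_option synthInstance.maxHeartbeats 400000

noncomputable section

/-- A monomial order: a linear (strict total) order on an additive monoid of exponents,
compatible with addition. -/
structure IsMonomialOrder {M : Type*} [AddCommMonoid M] (lt : M → M → Prop) : Prop where
  total : ∀ a b, lt a b ∨ a = b ∨ lt b a
  irrefl : ∀ a, ¬ lt a a
  trans : ∀ a b c, lt a b → lt b c → lt a c
  add_right : ∀ a b c, lt a b → lt (a + c) (b + c)

/-- A monomial well order: a monomial order for which `0` is the least element. -/
structure IsWellMonomialOrder {M : Type*} [AddCommMonoid M] (lt : M → M → Prop)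
    extends IsMonomialOrder lt : Prop where
  zero_le : ∀ a, a = 0 ∨ lt 0 a

/-- `e + ℕ^σ` inside the exponent monoid `σ →₀ ℕ`. -/
def upSetG {σ : Type*} (e : σ →₀ ℕ) : Set (σ →₀ ℕ) := {α | ∃ γ, α = e + γ}

/-- `e` is the `lt`-greatest exponent of the nonzero polynomial `f`. -/
def IsExpP {σ : Type*} {k : Type*} [CommSemiring k]
    (lt : (σ →₀ ℕ) → (σ →₀ ℕ) → Prop) (f : MvPolynomial σ k) (e : σ →₀ ℕ) : Prop :=
  e ∈ f.support ∧ ∀ β ∈ f.support, β ≠ e → lt β e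

/-- The set of `lt`-leading exponents of the nonzero elements of an ideal of polynomials. -/
def ExpSetP {σ : Type*} {k : Type*} [CommSemiring k]
    (lt : (σ →₀ ℕ) → (σ →₀ ℕ) → Prop) (I : Ideal (MvPolynomial σ k)) : Set (σ →₀ ℕ) :=
  {e | ∃ f ∈ I, IsExpP lt f e}

/-- The `x`-part of an exponent of `k[a,x]`. -/
def xpart {m n : ℕ} (μ : (Fin m ⊕ Fin n) →₀ ℕ) : Fin n →₀ ℕ :=
  (Finsupp.sumFinsuppEquivProdFinsupp μ).2

/-- The `a`-part of an exponent of `k[a,x]`. -/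
def apart {m n : ℕ} (μ : (Fin m ⊕ Fin n) →₀ ℕ) : Fin m →₀ ℕ :=
  (Finsupp.sumFinsuppEquivProdFinsupp μ).1

/-- `e` is the `prec`-greatest `x`-exponent `exp_≺(f)` occurring in `f ∈ k[a,x]`. -/
def IsExpX {m n : ℕ} {k : Type*} [CommSemiring k]
    (prec : (Fin n →₀ ℕ) → (Fin n →₀ ℕ) → Prop)
    (f : MvPolynomial (Fin m ⊕ Fin n) k) (e : Fin n →₀ ℕ) : Prop :=
  (∃ μ ∈ f.support, xpart μ = e) ∧ ∀ μ ∈ f.support, xpart μ ≠ e → prec (xpart μ) e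

/-- `lc_≺(f) ∈ k[a]`: the coefficient of `x^e` in `f ∈ k[a,x]` viewed as a polynomial in
`x` over `k[a]`. -/
def lcx {m n : ℕ} {k : Type*} [CommSemiring k]
    (f : MvPolynomial (Fin m ⊕ Fin n) k) (e : Fin n →₀ ℕ) : MvPolynomial (Fin m) k :=
  ∑ μ ∈ f.support.filter (fun μ => xpart μ = e),
    MvPolynomial.monomial (apart μ) (MvPolynomial.coeff μ f)

/-- The block order `<` on the exponents of `k[a,x]` built from `prec` (on the `x`-part)
and `lt0` (on the `a`-part). -/
def blockLt {m n : ℕ} (prec : (Fin n →₀ ℕ) → (Fin n →₀ ℕ) → Prop)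
    (lt0 : (Fin m →₀ ℕ) → (Fin m →₀ ℕ) → Prop)
    (μ μ' : (Fin m ⊕ Fin n) →₀ ℕ) : Prop :=
  prec (xpart μ) (xpart μ') ∨ (xpart μ = xpart μ' ∧ lt0 (apart μ) (apart μ'))

/-- The embedding `k[a] → k[a,x]`. -/
def embA {m n : ℕ} {k : Type*} [CommSemiring k] :
    MvPolynomial (Fin m) k →+* MvPolynomial (Fin m ⊕ Fin n) k :=
  (MvPolynomial.rename (Sum.inl : Fin m → Fin m ⊕ Fin n)).toRingHom
/-- The specialization `k[a] → F(P) = Frac(k[a]/P)`. -/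
def specAHom {m : ℕ} (k : Type*) [Field k] (P : Ideal (MvPolynomial (Fin m) k)) :
    MvPolynomial (Fin m) k →+* FractionRing (MvPolynomial (Fin m) k ⧸ P) :=
  (algebraMap (MvPolynomial (Fin m) k ⧸ P)
    (FractionRing (MvPolynomial (Fin m) k ⧸ P))).comp (Ideal.Quotient.mk P)

/-- The coefficientwise specialization `k[a,x] → F(P)[x]`. -/
def specPoly {m n : ℕ} (k : Type*) [Field k] (P : Ideal (MvPolynomial (Fin m) k)) :
    MvPolynomial (Fin m ⊕ Fin n) k →+*
      MvPolynomial (Fin n) (FractionRing (MvPolynomial (Fin m) k ⧸ P)) :=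
  MvPolynomial.eval₂Hom
    ((MvPolynomial.C :
        FractionRing (MvPolynomial (Fin m) k ⧸ P) →+* _).comp
      ((specAHom k P).comp (MvPolynomial.C)))
    (Sum.elim (fun i => MvPolynomial.C (specAHom k P (MvPolynomial.X i)))
      (fun j => MvPolynomial.X j))


/-!
Let `e` be a leading exponent of `(J)_P`. Clearing denominators, `e` is the `≺`-leading exponent
of `(F)_P` for some `F ∈ J ⊆ J̃`; we induct on the block-leading exponent `μ` of `F`, which is
a multiple of the leading exponent of some `g ∈ G`. If `g ∈ Q`, then `(g)_P = 0`, and subtracting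
a monomial multiple of `g` lowers `μ` without changing `(F)_P`. If `g ∉ Q` and the `x`-leading
coefficient of `F` survives in `F(P)`, then `e` is the `x`-part of `μ`, a multiple of
`exp_≺(g)`. Otherwise that coefficient lies in `P`, and `lc_≺(g) F - lc_≺(F) x^β g` has a smaller
block-leading exponent while its specialization is `(F)_P` times the nonzero `lc_≺(g)_P`.
-/

namespace IsMonomialOrder

variable {M : Type*} [AddCommMonoid M] {lt : M → M → Prop}

theorem add_left (h : IsMonomialOrder lt) {a b : M} (c : M) (hab : lt a b) :
    lt (c + a) (c + b) := by
  simpa only [add_comm c] using h.add_right a b c hab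

theorem exists_max (h : IsMonomialOrder lt) {s : Finset M} (hs : s.Nonempty) :
    ∃ e ∈ s, ∀ b ∈ s, b ≠ e → lt b e := by
  classical
  have : IsStrictTotalOrder M lt :=
    { trichotomous := fun a b hab hba => (h.total a b).resolve_left hab |>.resolve_right hba
      irrefl := h.irrefl
      trans := h.trans }
  let := linearOrderOfSTO lt
  obtain ⟨e, he, hmax⟩ := s.exists_max_image id hs
  exact ⟨e, he, fun b hb hbe => lt_of_le_of_ne (hmax b hb) hbe⟩

end IsMonomialOrder

namespace IsWellMonomialOrder

variable {M : Type*} [AddCommMonoid M] {lt : M → M → Prop}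

theorem not_add_lt (h : IsWellMonomialOrder lt) (a γ : M) : ¬ lt (a + γ) a := by
  intro hlt
  rcases h.zero_le γ with rfl | hγ
  · exact h.irrefl a (by simpa using hlt)
  · exact h.irrefl a (h.trans _ _ _ (by simpa using h.add_left a hγ) hlt)

theorem wellFounded {σ : Type*} [Finite σ] {lt : (σ →₀ ℕ) → (σ →₀ ℕ) → Prop}
    (h : IsWellMonomialOrder lt) : WellFounded lt := by
  have : IsStrictOrder (σ →₀ ℕ) lt := { irrefl := h.irrefl, trans := h.trans }
  rw [RelEmbedding.wellFounded_iff_isEmpty]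
  refine ⟨fun f => ?_⟩
  obtain ⟨i, j, hij, hle⟩ := wellQuasiOrdered_le f
  obtain ⟨γ, hγ⟩ := le_iff_exists_add.1 hle
  have hdesc : lt (f j) (f i) := f.map_rel_iff.2 hij
  exact h.not_add_lt (f i) γ (hγ ▸ hdesc)

end IsWellMonomialOrder

open MvPolynomial

section LeadingExponent

variable {σ R : Type*} [CommSemiring R] {lt : (σ →₀ ℕ) → (σ →₀ ℕ) → Prop}
  {f : MvPolynomial σ R} {e α β : σ →₀ ℕ}

theorem IsMonomialOrder.exists_isExpP (h : IsMonomialOrder lt) (hf : f ≠ 0) :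
    ∃ e, IsExpP lt f e :=
  h.exists_max (Finset.nonempty_iff_ne_empty.2 (mt support_eq_empty.1 hf))

namespace IsExpP

theorem ne_zero (h : IsExpP lt f e) : f ≠ 0 := by
  rintro rfl
  simp [IsExpP] at h

theorem eq_or_lt (h : IsExpP lt f e) {τ : σ →₀ ℕ} (hτ : τ ∈ f.support) : τ = e ∨ lt τ e :=
  or_iff_not_imp_left.2 (h.2 τ hτ)

theorem unique (hlt : IsMonomialOrder lt) {e' : σ →₀ ℕ} (h : IsExpP lt f e)
    (h' : IsExpP lt f e') : e = e' := by
  by_contra hne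
  exact hlt.irrefl e (hlt.trans _ _ _ (h'.2 e h.1 hne) (h.2 e' h'.1 (Ne.symm hne)))

theorem C_mul [NoZeroDivisors R] (h : IsExpP lt f e) {c : R} (hc : c ≠ 0) :
    IsExpP lt (C c * f) e := by
  have hsupp : (C c * f).support = f.support := by
    ext τ
    simp [mem_support_iff, coeff_C_mul, hc]
  rwa [IsExpP, hsupp]

theorem map {S : Type*} [CommSemiring S] (φ : R →+* S) (h : IsExpP lt f e)
    (he : φ (coeff e f) ≠ 0) : IsExpP lt (MvPolynomial.map φ f) e :=
  ⟨by rwa [mem_support_iff, coeff_map], fun τ hτ => h.2 τ (support_map_subset φ f hτ)⟩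

end IsExpP

theorem exists_eq_add_of_mem_support_monomial_mul {γ τ : σ →₀ ℕ} {c : R}
    (hτ : τ ∈ (monomial γ c * f).support) : ∃ τ' ∈ f.support, τ = γ + τ' := by
  rw [mem_support_iff, coeff_monomial_mul'] at hτ
  split_ifs at hτ with hγ
  · exact ⟨τ - γ, mem_support_iff.2 (right_ne_zero_of_mul hτ),
      (add_tsub_cancel_of_le hγ).symm⟩
  · exact absurd rfl hτ

theorem IsExpP.monomial_one_mul (hlt : IsMonomialOrder lt) (h : IsExpP lt f e) (γ : σ →₀ ℕ) :
    IsExpP lt (monomial γ 1 * f) (γ + e) := by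
  refine ⟨by simpa [mem_support_iff] using h.1, fun τ hτ hne => ?_⟩
  obtain ⟨τ', hτ', rfl⟩ := exists_eq_add_of_mem_support_monomial_mul hτ
  exact hlt.add_left γ (h.2 τ' hτ' fun h' => hne (h' ▸ rfl))

theorem IsExpP.upSetG_subset_expSetP (hlt : IsMonomialOrder lt) {I : Ideal (MvPolynomial σ R)}
    (hf : f ∈ I) (h : IsExpP lt f e) : upSetG e ⊆ ExpSetP lt I := by
  rintro _ ⟨γ, rfl⟩
  exact ⟨monomial γ 1 * f, I.mul_mem_left _ hf, add_comm γ e ▸ h.monomial_one_mul hlt γ⟩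

theorem IsExpP.lt_of_mem_support_cancel {R : Type*} [CommRing R]
    {p q : MvPolynomial σ R} (hlt : IsMonomialOrder lt) (hp : IsExpP lt p α)
    (hq : IsExpP lt q e) (hα : α = β + e) :
    ∀ τ ∈ (C (coeff e q) * p - monomial β (coeff α p) * q).support, lt τ α := by
  classical
  intro τ hτ
  have hτα : τ ≠ α := by
    rintro rfl
    rw [mem_support_iff, coeff_sub, coeff_C_mul, hα, coeff_monomial_mul, ← hα, mul_comm,
      sub_self] at hτ
    exact hτ rfl
  rcases Finset.mem_union.1 (support_sub σ _ _ hτ) with hτ | hτ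
  · rw [C_mul'] at hτ
    exact (hp.eq_or_lt (support_smul hτ)).resolve_left hτα
  · obtain ⟨τ', hτ', rfl⟩ := exists_eq_add_of_mem_support_monomial_mul hτ
    rcases hq.eq_or_lt hτ' with rfl | hlt'
    · exact absurd hα.symm hτα
    · exact hα ▸ hlt.add_left β hlt'

end LeadingExponent

section BlockOrder

variable {m n : ℕ}

@[simp] theorem xpart_apply (μ : (Fin m ⊕ Fin n) →₀ ℕ) (j : Fin n) :
    xpart μ j = μ (Sum.inr j) := Finsupp.snd_sumFinsuppEquivProdFinsupp μ j

@[simp] theorem apart_apply (μ : (Fin m ⊕ Fin n) →₀ ℕ) (i : Fin m) :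
    apart μ i = μ (Sum.inl i) := Finsupp.fst_sumFinsuppEquivProdFinsupp μ i

@[simp] theorem xpart_add (μ ν : (Fin m ⊕ Fin n) →₀ ℕ) :
    xpart (μ + ν) = xpart μ + xpart ν :=
  congrArg Prod.snd (map_add Finsupp.sumFinsuppAddEquivProdFinsupp μ ν)

@[simp] theorem apart_add (μ ν : (Fin m ⊕ Fin n) →₀ ℕ) :
    apart (μ + ν) = apart μ + apart ν :=
  congrArg Prod.fst (map_add Finsupp.sumFinsuppAddEquivProdFinsupp μ ν)

@[simp] theorem xpart_zero : xpart (0 : (Fin m ⊕ Fin n) →₀ ℕ) = 0 := by ext; simp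

@[simp] theorem apart_zero : apart (0 : (Fin m ⊕ Fin n) →₀ ℕ) = 0 := by ext; simp

@[simp] theorem xpart_sumElim (γ : Fin m →₀ ℕ) (α : Fin n →₀ ℕ) :
    xpart (Finsupp.sumElim γ α) = α := by ext; simp

@[simp] theorem apart_sumElim (γ : Fin m →₀ ℕ) (α : Fin n →₀ ℕ) :
    apart (Finsupp.sumElim γ α) = γ := by ext; simp

theorem sumElim_apart_xpart (μ : (Fin m ⊕ Fin n) →₀ ℕ) :
    Finsupp.sumElim (apart μ) (xpart μ) = μ := by
  ext (i | j) <;> simp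

theorem eq_of_apart_eq_of_xpart_eq {μ ν : (Fin m ⊕ Fin n) →₀ ℕ} (ha : apart μ = apart ν)
    (hx : xpart μ = xpart ν) : μ = ν := by
  rw [← sumElim_apart_xpart μ, ← sumElim_apart_xpart ν, ha, hx]

variable {prec : (Fin n →₀ ℕ) → (Fin n →₀ ℕ) → Prop} {lt0 : (Fin m →₀ ℕ) → (Fin m →₀ ℕ) → Prop}

theorem isWellMonomialOrder_blockLt (hprec : IsWellMonomialOrder prec)
    (hlt0 : IsWellMonomialOrder lt0) : IsWellMonomialOrder (blockLt prec lt0) where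
  total μ ν := by
    rcases hprec.total (xpart μ) (xpart ν) with h | hx | h
    · exact Or.inl (Or.inl h)
    · rcases hlt0.total (apart μ) (apart ν) with h | ha | h
      · exact Or.inl (Or.inr ⟨hx, h⟩)
      · exact Or.inr (Or.inl (eq_of_apart_eq_of_xpart_eq ha hx))
      · exact Or.inr (Or.inr (Or.inr ⟨hx.symm, h⟩))
    · exact Or.inr (Or.inr (Or.inl h))
  irrefl μ := by
    rintro (h | ⟨-, h⟩)
    exacts [hprec.irrefl _ h, hlt0.irrefl _ h]
  trans μ ν ρ := by
    rintro (h₁ | ⟨hx₁, h₁⟩) (h₂ | ⟨hx₂, h₂⟩)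
    · exact Or.inl (hprec.trans _ _ _ h₁ h₂)
    · exact Or.inl (hx₂ ▸ h₁)
    · exact Or.inl (hx₁ ▸ h₂)
    · exact Or.inr ⟨hx₁.trans hx₂, hlt0.trans _ _ _ h₁ h₂⟩
  add_right μ ν ρ := by
    rintro (h | ⟨hx, h⟩)
    · exact Or.inl (by simpa using hprec.add_right _ _ (xpart ρ) h)
    · exact Or.inr ⟨by simp [hx], by simpa using hlt0.add_right _ _ (apart ρ) h⟩
  zero_le μ := by
    rcases hprec.zero_le (xpart μ) with hx | hx
    · rcases hlt0.zero_le (apart μ) with ha | ha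
      · exact Or.inl (eq_of_apart_eq_of_xpart_eq (by simp [ha]) (by simp [hx]))
      · exact Or.inr (Or.inr ⟨by simp [hx], by simpa using ha⟩)
    · exact Or.inr (Or.inl (by simpa using hx))

end BlockOrder

section XView

variable {m n : ℕ} {k : Type*} [CommSemiring k]

def xView :
    MvPolynomial (Fin m ⊕ Fin n) k ≃ₐ[k] MvPolynomial (Fin n) (MvPolynomial (Fin m) k) :=
  (sumAlgEquiv k (Fin m) (Fin n)).trans (commAlgEquiv k (Fin m) (Fin n))

theorem xView_monomial (μ : (Fin m ⊕ Fin n) →₀ ℕ) (c : k) :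
    xView (monomial μ c) = monomial (xpart μ) (monomial (apart μ) c) := by
  simp [xView, sumAlgEquiv, commAlgEquiv, monomial, AddMonoidAlgebra.curryAlgEquiv_single,
    xpart, apart]

theorem coeff_coeff_xView (f : MvPolynomial (Fin m ⊕ Fin n) k) (α : Fin n →₀ ℕ)
    (γ : Fin m →₀ ℕ) : coeff γ (coeff α (xView f)) = coeff (Finsupp.sumElim γ α) f := by
  classical
  induction f using MvPolynomial.induction_on' with
  | monomial μ c =>
    have : μ = Finsupp.sumElim γ α ↔ xpart μ = α ∧ apart μ = γ := by
      constructor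
      · rintro rfl; simp
      · rintro ⟨rfl, rfl⟩; exact (sumElim_apart_xpart μ).symm
    simp only [xView_monomial, coeff_monomial, this, ite_and]
    split_ifs <;> simp_all
  | add p q hp hq => simp [hp, hq]

theorem lcx_eq_coeff_xView (f : MvPolynomial (Fin m ⊕ Fin n) k) (α : Fin n →₀ ℕ) :
    lcx f α = coeff α (xView f) := by
  classical
  conv_rhs => rw [← support_sum_monomial_coeff f]
  simp only [map_sum, xView_monomial, coeff_sum, coeff_monomial, lcx, Finset.sum_filter]

theorem xView_embA (q : MvPolynomial (Fin m) k) : xView (embA (n := n) q) = C q := by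
  have : (xView : _ ≃ₐ[k] MvPolynomial (Fin n) _).toAlgHom.comp (rename Sum.inl) =
      IsScalarTower.toAlgHom k (MvPolynomial (Fin m) k) _ := by
    ext i; simp [xView]
  exact DFunLike.congr_fun this q

end XView

section XViewSupport

variable {m n : ℕ} {k : Type*} [CommSemiring k] {f : MvPolynomial (Fin m ⊕ Fin n) k}

theorem xpart_mem_support_xView {τ : (Fin m ⊕ Fin n) →₀ ℕ} (hτ : τ ∈ f.support) :
    xpart τ ∈ (xView f).support := by
  rw [mem_support_iff] at hτ ⊢
  intro h0
  apply hτ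
  rw [← sumElim_apart_xpart τ, ← coeff_coeff_xView, h0, coeff_zero]

theorem exists_xpart_eq_of_mem_support_xView {α : Fin n →₀ ℕ} (hα : α ∈ (xView f).support) :
    ∃ τ ∈ f.support, xpart τ = α := by
  obtain ⟨γ, hγ⟩ := ne_zero_iff.1 (mem_support_iff.1 hα)
  exact ⟨Finsupp.sumElim γ α, by rwa [mem_support_iff, ← coeff_coeff_xView], xpart_sumElim γ α⟩

variable {prec : (Fin n →₀ ℕ) → (Fin n →₀ ℕ) → Prop}

theorem IsExpX.isExpP_xView {e : Fin n →₀ ℕ} (h : IsExpX prec f e) :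
    IsExpP prec (xView f) e := by
  obtain ⟨⟨μ, hμ, rfl⟩, hmax⟩ := h
  refine ⟨xpart_mem_support_xView hμ, fun α hα hne => ?_⟩
  obtain ⟨τ, hτ, rfl⟩ := exists_xpart_eq_of_mem_support_xView hα
  exact hmax τ hτ hne

theorem IsExpP.isExpP_xView_xpart {lt0 : (Fin m →₀ ℕ) → (Fin m →₀ ℕ) → Prop}
    {μ : (Fin m ⊕ Fin n) →₀ ℕ} (h : IsExpP (blockLt prec lt0) f μ) :
    IsExpP prec (xView f) (xpart μ) := by
  refine ⟨xpart_mem_support_xView h.1, fun α hα hne => ?_⟩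
  obtain ⟨τ, hτ, rfl⟩ := exists_xpart_eq_of_mem_support_xView hα
  exact (h.2 τ hτ fun hτμ => hne (hτμ ▸ rfl)).resolve_right fun h' => hne h'.1

end XViewSupport

section Specialization

variable {m n : ℕ} {k : Type*} [CommSemiring k] {K : Type*} [CommSemiring K]

def specMap (φ : MvPolynomial (Fin m) k →+* K) :
    MvPolynomial (Fin m ⊕ Fin n) k →+* MvPolynomial (Fin n) K :=
  (map φ).comp (xView : _ ≃ₐ[k] MvPolynomial (Fin n) _).toRingEquiv.toRingHom

variable (φ : MvPolynomial (Fin m) k →+* K)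

theorem specMap_apply (f : MvPolynomial (Fin m ⊕ Fin n) k) :
    specMap φ f = map φ (xView f) := rfl

theorem specMap_C (c : k) : specMap (n := n) φ (C c) = C (φ (C c)) := by
  simp [specMap_apply, xView]

theorem specMap_X_inr (j : Fin n) : specMap φ (X (Sum.inr j)) = X j := by
  simp [specMap_apply, xView]

theorem specMap_embA (q : MvPolynomial (Fin m) k) : specMap (n := n) φ (embA q) = C (φ q) := by
  rw [specMap_apply, xView_embA, map_C]

theorem specPoly_eq_specMap {k : Type*} [Field k] (P : Ideal (MvPolynomial (Fin m) k)) :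
    specPoly (n := n) k P = specMap (specAHom k P) := by
  apply MvPolynomial.ringHom_ext
  · intro c
    simp [specPoly, specMap_C]
  · rintro (i | j) <;> simp [specPoly, specMap_apply, xView]

theorem map_specMap_sup_map_embA {Q : Ideal (MvPolynomial (Fin m) k)} (hQ : ∀ q ∈ Q, φ q = 0)
    (J : Ideal (MvPolynomial (Fin m ⊕ Fin n) k)) :
    (J ⊔ Q.map embA).map (specMap φ) = J.map (specMap φ) := by
  have hker : Q.map ((specMap (n := n) φ).comp embA) = ⊥ := by
    refine (Ideal.map_eq_bot_iff_le_ker _).2 fun q hq => ?_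
    rw [RingHom.mem_ker, RingHom.comp_apply, specMap_embA, hQ q hq, map_zero]
  rw [Ideal.map_sup, Ideal.map_map, hker, sup_bot_eq]

end Specialization

section ClearingDenominators

variable {m n : ℕ} {k : Type*} [CommSemiring k] {K : Type*} [CommSemiring K]
  {φ : MvPolynomial (Fin m) k →+* K}

theorem specMap_embA_mul_add_embA_mul {F₁ F₂ : MvPolynomial (Fin m ⊕ Fin n) k}
    {f₁ f₂ : MvPolynomial (Fin n) K} {d₁ d₂ : MvPolynomial (Fin m) k}
    (h₁ : specMap φ F₁ = C (φ d₁) * f₁) (h₂ : specMap φ F₂ = C (φ d₂) * f₂) :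
    specMap φ (embA d₂ * F₁ + embA d₁ * F₂) = C (φ (d₁ * d₂)) * (f₁ + f₂) := by
  rw [map_add, map_mul, map_mul, specMap_embA, specMap_embA, h₁, h₂, map_mul, C_mul]
  ring

variable [IsDomain K]

theorem exists_specMap_eq_C_mul (hφ : ∀ z : K, ∃ a b, φ b ≠ 0 ∧ φ b * z = φ a)
    (r : MvPolynomial (Fin n) K) :
    ∃ R d, φ d ≠ 0 ∧ specMap φ R = C (φ d) * r := by
  induction r using MvPolynomial.induction_on with
  | C z =>
    obtain ⟨a, b, hb, hz⟩ := hφ z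
    exact ⟨embA a, b, hb, by rw [specMap_embA, ← hz, C_mul]⟩
  | add p q hp hq =>
    obtain ⟨R₁, d₁, hd₁, h₁⟩ := hp
    obtain ⟨R₂, d₂, hd₂, h₂⟩ := hq
    exact ⟨_, d₁ * d₂, by simpa using ⟨hd₁, hd₂⟩, specMap_embA_mul_add_embA_mul h₁ h₂⟩
  | mul_X p j hp =>
    obtain ⟨R, d, hd, h⟩ := hp
    exact ⟨R * X (Sum.inr j), d, hd, by rw [map_mul, h, specMap_X_inr, mul_assoc]⟩

theorem exists_mem_specMap_eq_C_mul (hφ : ∀ z : K, ∃ a b, φ b ≠ 0 ∧ φ b * z = φ a)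
    {J : Ideal (MvPolynomial (Fin m ⊕ Fin n) k)}
    {f : MvPolynomial (Fin n) K} (hf : f ∈ J.map (specMap φ)) :
    ∃ F ∈ J, ∃ d, φ d ≠ 0 ∧ specMap φ F = C (φ d) * f := by
  induction hf using Submodule.span_induction with
  | mem x hx =>
    obtain ⟨F, hF, rfl⟩ := hx
    exact ⟨F, hF, 1, by simp, by rw [map_one, C_1, one_mul]⟩
  | zero => exact ⟨0, J.zero_mem, 1, by simp, by rw [map_zero, mul_zero]⟩
  | add x y _ _ hx hy =>
    obtain ⟨F₁, hF₁, d₁, hd₁, h₁⟩ := hx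
    obtain ⟨F₂, hF₂, d₂, hd₂, h₂⟩ := hy
    exact ⟨_, J.add_mem (J.mul_mem_left _ hF₁) (J.mul_mem_left _ hF₂), d₁ * d₂,
      by simpa using ⟨hd₁, hd₂⟩, specMap_embA_mul_add_embA_mul h₁ h₂⟩
  | smul r x _ hx =>
    obtain ⟨F, hF, d, hd, h⟩ := hx
    obtain ⟨R, d', hd', hR⟩ := exists_specMap_eq_C_mul hφ r
    refine ⟨R * F, J.mul_mem_left _ hF, d' * d, by simpa using ⟨hd', hd⟩, ?_⟩
    rw [map_mul, hR, h, smul_eq_mul, map_mul, C_mul]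
    ring

end ClearingDenominators

section FractionField

variable {m : ℕ} {k : Type*} [Field k] {P : Ideal (MvPolynomial (Fin m) k)}

theorem specAHom_eq_zero_iff {q : MvPolynomial (Fin m) k} : specAHom k P q = 0 ↔ q ∈ P :=
  (IsFractionRing.to_map_eq_zero_iff (R := MvPolynomial (Fin m) k ⧸ P)).trans
    Ideal.Quotient.eq_zero_iff_mem

theorem exists_specAHom_mul_eq [P.IsPrime] (z : FractionRing (MvPolynomial (Fin m) k ⧸ P)) :
    ∃ a b, specAHom k P b ≠ 0 ∧ specAHom k P b * z = specAHom k P a := by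
  obtain ⟨x, y, hy, rfl⟩ := IsFractionRing.div_surjective (MvPolynomial (Fin m) k ⧸ P) z
  obtain ⟨a, rfl⟩ := Ideal.Quotient.mk_surjective x
  obtain ⟨b, rfl⟩ := Ideal.Quotient.mk_surjective y
  have hb : specAHom k P b ≠ 0 :=
    IsFractionRing.to_map_ne_zero_of_mem_nonZeroDivisors (R := MvPolynomial (Fin m) k ⧸ P) hy
  exact ⟨a, b, hb, mul_div_cancel₀ _ hb⟩

end FractionField

section Reduction

variable {m n : ℕ} {K : Type*} [CommRing K]

section

variable {k : Type*} [CommRing k] {φ : MvPolynomial (Fin m) k →+* K}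
  {I : Ideal (MvPolynomial (Fin m ⊕ Fin n) k)} {F g : MvPolynomial (Fin m ⊕ Fin n) k}

theorem exists_reduction_of_lc_mem_ker {prec : (Fin n →₀ ℕ) → (Fin n →₀ ℕ) → Prop}
    {lt0 : (Fin m →₀ ℕ) → (Fin m →₀ ℕ) → Prop} (hprec : IsMonomialOrder prec)
    (hF : F ∈ I) (hg : g ∈ I) {μ : (Fin m ⊕ Fin n) →₀ ℕ} {e β : Fin n →₀ ℕ}
    (hFμ : IsExpP (blockLt prec lt0) F μ) (hge : IsExpP prec (xView g) e)
    (hμ : xpart μ = β + e) (hlc : φ (coeff e (xView g)) ≠ 0)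
    (hker : φ (coeff (xpart μ) (xView F)) = 0) :
    ∃ F' ∈ I, (∃ c ≠ 0, specMap φ F' = C c * specMap φ F) ∧
      ∀ τ ∈ F'.support, blockLt prec lt0 τ μ := by
  set F' := xView.symm (C (coeff e (xView g)) * xView F -
    monomial β (coeff (xpart μ) (xView F)) * xView g)
  have hF' : xView F' = C (coeff e (xView g)) * xView F -
      monomial β (coeff (xpart μ) (xView F)) * xView g := AlgEquiv.apply_symm_apply _ _
  refine ⟨F', ?_, ⟨φ (coeff e (xView g)), hlc, ?_⟩, fun τ hτ => Or.inl ?_⟩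
  · have : F' = xView.symm (C (coeff e (xView g))) * F -
        xView.symm (monomial β (coeff (xpart μ) (xView F))) * g := by
      simp [F']
    rw [this]
    exact I.sub_mem (I.mul_mem_left _ hF) (I.mul_mem_left _ hg)
  · rw [specMap_apply, hF', map_sub, map_mul, map_mul, map_C, map_monomial, hker,
      monomial_zero, zero_mul, sub_zero, specMap_apply]
  · exact hFμ.isExpP_xView_xpart.lt_of_mem_support_cancel hprec hge hμ _
      (hF' ▸ xpart_mem_support_xView hτ)

end

variable {k : Type*} [Field k] {φ : MvPolynomial (Fin m) k →+* K}
  {I : Ideal (MvPolynomial (Fin m ⊕ Fin n) k)} {F g : MvPolynomial (Fin m ⊕ Fin n) k}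

theorem exists_reduction_of_specMap_eq_zero [Nontrivial K]
    {lt : ((Fin m ⊕ Fin n) →₀ ℕ) → ((Fin m ⊕ Fin n) →₀ ℕ) → Prop} (hlt : IsMonomialOrder lt)
    (hF : F ∈ I) (hg : g ∈ I) (hφg : specMap φ g = 0)
    {μ ε δ : (Fin m ⊕ Fin n) →₀ ℕ} (hFμ : IsExpP lt F μ) (hgε : IsExpP lt g ε)
    (hμ : μ = δ + ε) :
    ∃ F' ∈ I, (∃ c ≠ 0, specMap φ F' = C c * specMap φ F) ∧ ∀ τ ∈ F'.support, lt τ μ := by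
  refine ⟨C (coeff ε g) * F - monomial δ (coeff μ F) * g,
    I.sub_mem (I.mul_mem_left _ hF) (I.mul_mem_left _ hg),
    ⟨φ (C (coeff ε g)), ?_, by rw [map_sub, map_mul, map_mul, hφg, mul_zero, sub_zero,
      specMap_C]⟩, hFμ.lt_of_mem_support_cancel hlt hgε hμ⟩
  exact (((mem_support_iff.1 hgε.1).isUnit.map C).map φ).ne_zero

end Reduction

theorem exists_mem_upSetG_of_isExpP_specMap {m n : ℕ} {k : Type*} [Field k] {K : Type*}
    [CommRing K] [IsDomain K] {prec : (Fin n →₀ ℕ) → (Fin n →₀ ℕ) → Prop}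
    {lt0 : (Fin m →₀ ℕ) → (Fin m →₀ ℕ) → Prop} (hprec : IsWellMonomialOrder prec)
    (hlt0 : IsWellMonomialOrder lt0) {φ : MvPolynomial (Fin m) k →+* K}
    {I : Ideal (MvPolynomial (Fin m ⊕ Fin n) k)}
    {G S : Finset (MvPolynomial (Fin m ⊕ Fin n) k)} (hGI : ∀ g ∈ G, g ∈ I)
    (hGB : ExpSetP (blockLt prec lt0) I ⊆
      ⋃ g ∈ G, {μ | ∃ ε, IsExpP (blockLt prec lt0) g ε ∧ μ ∈ upSetG ε})
    (hGS : ∀ g ∈ G, g ∉ S → specMap φ g = 0)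
    {E : MvPolynomial (Fin m ⊕ Fin n) k → Fin n →₀ ℕ}
    (hE : ∀ g ∈ S, IsExpP prec (xView g) (E g))
    (hlc : ∀ g ∈ S, φ (coeff (E g) (xView g)) ≠ 0)
    {F : MvPolynomial (Fin m ⊕ Fin n) k} (hF : F ∈ I) {e : Fin n →₀ ℕ}
    (he : IsExpP prec (specMap φ F) e) : ∃ g ∈ S, e ∈ upSetG (E g) := by
  have hblock := isWellMonomialOrder_blockLt hprec hlt0
  have hprec' := hprec.toIsMonomialOrder
  obtain ⟨μ, hFμ⟩ := hblock.exists_isExpP (f := F) fun h0 => he.ne_zero (by rw [h0, map_zero])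
  induction μ using hblock.wellFounded.induction generalizing F with
  | _ μ IH =>
  obtain ⟨g, hgG, ε, hgε, δ, rfl⟩ :
      ∃ g ∈ G, ∃ ε, IsExpP (blockLt prec lt0) g ε ∧ ∃ δ, μ = ε + δ := by
    simpa [upSetG] using hGB ⟨F, hF, hFμ⟩
  have hred : (∃ g ∈ S, e ∈ upSetG (E g)) ∨
      ∃ F' ∈ I, (∃ c ≠ 0, specMap φ F' = C c * specMap φ F) ∧
        ∀ τ ∈ F'.support, blockLt prec lt0 τ (ε + δ) := by
    by_cases hgS : g ∈ S
    · have hεE : xpart ε = E g := hgε.isExpP_xView_xpart.unique hprec' (hE g hgS)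
      have hμ : xpart (ε + δ) = xpart δ + E g := by rw [xpart_add, hεE, add_comm]
      by_cases hker : φ (coeff (xpart (ε + δ)) (xView F)) = 0
      · exact Or.inr (exists_reduction_of_lc_mem_ker hprec' hF (hGI g hgG) hFμ (hE g hgS) hμ
          (hlc g hgS) hker)
      · have he_eq : e = xpart (ε + δ) := he.unique hprec' (hFμ.isExpP_xView_xpart.map φ hker)
        exact Or.inl ⟨g, hgS, xpart δ, by rw [he_eq, hμ, add_comm]⟩
    · exact Or.inr (exists_reduction_of_specMap_eq_zero hblock.toIsMonomialOrder hF (hGI g hgG)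
        (hGS g hgG hgS) hFμ hgε (add_comm ε δ))
  obtain hdone | ⟨F', hF', ⟨c, hc, hcF⟩, hbelow⟩ := hred
  · exact hdone
  have he' : IsExpP prec (specMap φ F') e := hcF ▸ he.C_mul hc
  obtain ⟨μ', hF'μ'⟩ := hblock.exists_isExpP (f := F') fun h0 => he'.ne_zero (by rw [h0, map_zero])
  exact IH μ' (hbelow μ' hF'μ'.1) hF' he' hF'μ'

theorem genGB_polynomial_case_general {m n : ℕ} (k : Type) [Field k]
    (prec : (Fin n →₀ ℕ) → (Fin n →₀ ℕ) → Prop) (hprec : IsWellMonomialOrder prec)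
    (lt0 : (Fin m →₀ ℕ) → (Fin m →₀ ℕ) → Prop) (hlt0 : IsWellMonomialOrder lt0)
    (Q : Ideal (MvPolynomial (Fin m) k))
    (J : Ideal (MvPolynomial (Fin m ⊕ Fin n) k))
    (Jt : Ideal (MvPolynomial (Fin m ⊕ Fin n) k))
    (hJt : Jt = J ⊔ Ideal.map (embA (n := n)) Q)
    (G : Finset (MvPolynomial (Fin m ⊕ Fin n) k))
    (hGJt : ∀ g ∈ G, g ∈ Jt)
    (hGB : ExpSetP (blockLt prec lt0) Jt =
      ⋃ g ∈ G, {μ | ∃ ε, IsExpP (blockLt prec lt0) g ε ∧ μ ∈ upSetG ε})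
    (E : MvPolynomial (Fin m ⊕ Fin n) k → (Fin n →₀ ℕ))
    (hE : ∀ g ∈ G, IsExpX prec g (E g))
    (𝒢 : Finset (MvPolynomial (Fin m ⊕ Fin n) k))
    (h𝒢 : ∀ g, g ∈ 𝒢 ↔ g ∈ G ∧ ¬ ∃ p ∈ Q, g = embA p)
    (P : Ideal (MvPolynomial (Fin m) k)) (hP : P.IsPrime) (hQP : Q ≤ P)
    (hhP : (∏ g ∈ 𝒢, lcx g (E g)) ∉ P) :
    (∀ g ∈ 𝒢, specPoly k P g ∈ Ideal.map (specPoly (n := n) k P) J) ∧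
    (ExpSetP prec (Ideal.map (specPoly (n := n) k P) J) =
      ⋃ g ∈ 𝒢, {α | ∃ e, IsExpP prec (specPoly k P g) e ∧ α ∈ upSetG e}) := by
  rw [specPoly_eq_specMap]
  have hQ : ∀ q ∈ Q, specAHom k P q = 0 := fun q hq => specAHom_eq_zero_iff.2 (hQP hq)
  have hG𝒢 : ∀ g ∈ 𝒢, g ∈ G := fun g hg => ((h𝒢 g).1 hg).1
  have hGS : ∀ g ∈ G, g ∉ 𝒢 → specMap (specAHom k P) g = 0 := by
    intro g hg hg𝒢
    obtain ⟨p, hp, rfl⟩ := not_not.1 fun h => hg𝒢 ((h𝒢 g).2 ⟨hg, h⟩)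
    rw [specMap_embA, hQ p hp, C_0]
  have hE' : ∀ g ∈ 𝒢, IsExpP prec (xView g) (E g) := fun g hg => (hE g (hG𝒢 g hg)).isExpP_xView
  have hlc : ∀ g ∈ 𝒢, specAHom k P (coeff (E g) (xView g)) ≠ 0 := fun g hg h0 =>
    hhP (Ideal.mem_of_dvd _ (Finset.dvd_prod_of_mem _ hg)
      (lcx_eq_coeff_xView g (E g) ▸ specAHom_eq_zero_iff.1 h0))
  have hmem : ∀ g ∈ 𝒢, specMap (specAHom k P) g ∈ J.map (specMap (specAHom k P)) := by
    intro g hg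
    rw [← map_specMap_sup_map_embA _ hQ, ← hJt]
    exact Ideal.mem_map_of_mem _ (hGJt g (hG𝒢 g hg))
  refine ⟨hmem, subset_antisymm ?_ (Set.iUnion₂_subset fun g hg => ?_)⟩
  · rintro e ⟨f, hf, hfe⟩
    obtain ⟨F, hF, d, hd, hFf⟩ := exists_mem_specMap_eq_C_mul exists_specAHom_mul_eq hf
    obtain ⟨g, hg, hge⟩ := exists_mem_upSetG_of_isExpP_specMap hprec hlt0 hGJt hGB.le hGS hE'
      hlc (hJt ▸ Ideal.mem_sup_left hF) (hFf ▸ hfe.C_mul hd)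
    exact Set.mem_biUnion hg ⟨E g, (hE' g hg).map _ (hlc g hg), hge⟩
  · rintro _ ⟨e, he, hα⟩
    exact he.upSetG_subset_expSetP hprec.toIsMonomialOrder (hmem g hg) hα

/-- with `G` a minimal Gröbner basis of `J̃ = J + Q·k[a,x]` for the block
order, `𝒢 = {g ∈ G : g ∉ Q}` and `h = ∏_{g ∈ 𝒢} lc_≺(g)`, for every prime `P ⊇ Q` of
`k[a]` with `h ∉ P` the set `{(g)_P : g ∈ 𝒢}` is a `≺`-Gröbner basis of `(J)_P`. -/
theorem genGB_polynomial_case {m n : ℕ} (k : Type) [Field k]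
    (prec : (Fin n →₀ ℕ) → (Fin n →₀ ℕ) → Prop) (hprec : IsWellMonomialOrder prec)
    (lt0 : (Fin m →₀ ℕ) → (Fin m →₀ ℕ) → Prop) (hlt0 : IsWellMonomialOrder lt0)
    (Q : Ideal (MvPolynomial (Fin m) k)) (hQ : Q.IsPrime)
    (J : Ideal (MvPolynomial (Fin m ⊕ Fin n) k))
    (Jt : Ideal (MvPolynomial (Fin m ⊕ Fin n) k))
    (hJt : Jt = J ⊔ Ideal.map (embA (n := n)) Q)
    (G : Finset (MvPolynomial (Fin m ⊕ Fin n) k))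
    (hGJt : ∀ g ∈ G, g ∈ Jt) (hGne : ∀ g ∈ G, g ≠ 0)
    (hGB : ExpSetP (blockLt prec lt0) Jt =
      ⋃ g ∈ G, {μ | ∃ ε, IsExpP (blockLt prec lt0) g ε ∧ μ ∈ upSetG ε})
    (hmin : ∀ g ∈ G, ∀ g' ∈ G, g ≠ g' → ∀ ε ε',
      IsExpP (blockLt prec lt0) g ε → IsExpP (blockLt prec lt0) g' ε' → ε ∉ upSetG ε')
    (E : MvPolynomial (Fin m ⊕ Fin n) k → (Fin n →₀ ℕ))
    (hE : ∀ g ∈ G, IsExpX prec g (E g))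
    (𝒢 : Finset (MvPolynomial (Fin m ⊕ Fin n) k))
    (h𝒢 : ∀ g, g ∈ 𝒢 ↔ g ∈ G ∧ ¬ ∃ p ∈ Q, g = embA p)
    (P : Ideal (MvPolynomial (Fin m) k)) (hP : P.IsPrime) (hQP : Q ≤ P)
    (hhP : (∏ g ∈ 𝒢, lcx g (E g)) ∉ P) :
    (∀ g ∈ 𝒢, specPoly k P g ∈ Ideal.map (specPoly (n := n) k P) J) ∧
    (ExpSetP prec (Ideal.map (specPoly (n := n) k P) J) =
      ⋃ g ∈ 𝒢, {α | ∃ e, IsExpP prec (specPoly k P g) e ∧ α ∈ upSetG e}) :=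
  genGB_polynomial_case_general k prec hprec lt0 hlt0 Q J Jt hJt G hGJt hGB E hE 𝒢 h𝒢 P hP hQP hhP
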